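/- arXiv:2105.13790 — 3 statements merged into one kernel-verified Lean document; each statement's English description precedes it below -/
import Mathlib

section
/- Let f : Ω^n → ℝ be c-bounded on a subset Ξ ⊆ Ω^n, i.e. |f(x) - f(x')| ≤ Σ_{i : x_i ≠ x_i'} c_i for all x, x' ∈ Ξ, where c ∈ [0,∞)^n. Let X = (X_1,...,X_n) be independent Ω-valued random variables, m = E[f(X) | X ∈ Ξ], and γ = 1 - P(X ∈ Ξ). Then for every ε > γ‖c‖_1, P(|f(X) - m| > ε) ≤ 2γ + 2 exp(-2(ε - γ‖c‖_1)² / ‖c‖_2²). -/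
open MeasureTheory ProbabilityTheory Real Set Function Filter
open scoped Classical ENNReal

/-! ### Generic helpers -/

lemma integrable_of_abs_le {β : Type*} [MeasurableSpace β] {ν : Measure β} [IsFiniteMeasure ν]
    {g : β → ℝ} (hg : AEStronglyMeasurable g ν) {K : ℝ} (h : ∀ᵐ z ∂ν, |g z| ≤ K) :
    Integrable g ν :=
  Integrable.mono' (integrable_const K) hg (by simpa [Real.norm_eq_abs] using h)

/-! ### The analytic lemma behind Hoeffding's lemma -/

lemma logMgfBound {p : ℝ} (hp0 : 0 ≤ p) (hp1 : p ≤ 1) (h : ℝ) :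
    -(p * h) + Real.log (1 - p + p * Real.exp h) ≤ h ^ 2 / 8 := by
  set D : ℝ → ℝ := fun y => 1 - p + p * Real.exp y with hD
  have hDpos : ∀ y, 0 < D y := by
    intro y
    rcases eq_or_lt_of_le hp1 with h1 | h1
    · have : D y = Real.exp y := by simp [hD, ← h1]
      rw [this]; exact Real.exp_pos y
    · have h2 : 0 ≤ p * Real.exp y := mul_nonneg hp0 (Real.exp_pos y).le
      have : 0 < 1 - p := by linarith
      simp only [hD]; linarith
  set W : ℝ → ℝ := fun y => p * Real.exp y / D y with hW
  set L : ℝ → ℝ := fun y => -(p * y) + Real.log (D y) with hL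
  have hW0 : ∀ y, 0 ≤ W y := fun y =>
    div_nonneg (mul_nonneg hp0 (Real.exp_pos y).le) (hDpos y).le
  have hW1 : ∀ y, W y ≤ 1 := by
    intro y
    rw [hW, div_le_one (hDpos y)]
    simp only [hD]; linarith
  have hDderiv : ∀ y, HasDerivAt D (p * Real.exp y) y := by
    intro y
    exact ((Real.hasDerivAt_exp y).const_mul p).const_add (1 - p)
  have hLderiv : ∀ y, HasDerivAt L (W y - p) y := by
    intro y
    have hlog : HasDerivAt (fun z => Real.log (D z)) (p * Real.exp y / D y) y :=
      (hDderiv y).log (hDpos y).ne'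
    have hlin : HasDerivAt (fun z => -(p * z)) (-p) y := by
      exact (((hasDerivAt_id y).const_mul p).neg).congr_deriv (by ring)
    have := hlin.add hlog
    exact this.congr_deriv (by simp only [hW]; ring)
  have hL'deriv : ∀ y, HasDerivAt (fun z => W z - p) (W y * (1 - W y)) y := by
    intro y
    have hnum : HasDerivAt (fun z => p * Real.exp z) (p * Real.exp y) y :=
      (Real.hasDerivAt_exp y).const_mul p
    have hdiv := hnum.div (hDderiv y) (hDpos y).ne'
    have heq : (p * Real.exp y * D y - p * Real.exp y * (p * Real.exp y)) / (D y) ^ 2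
        = W y * (1 - W y) := by
      rw [hW]
      simp only
      rw [one_sub_div (hDpos y).ne', div_mul_div_comm, pow_two]
      ring
    rw [heq] at hdiv
    exact hdiv.sub_const p
  have hW14 : ∀ y, ‖W y * (1 - W y)‖ ≤ 1 / 4 := by
    intro y
    rw [Real.norm_eq_abs, abs_le]
    constructor <;> nlinarith [hW0 y, hW1 y, sq_nonneg (W y - 1 / 2)]
  have hD0 : D 0 = 1 := by simp [hD]
  have hL'0 : W 0 - p = 0 := by
    simp [hW, hD0, Real.exp_zero]
  have hL'bound : ∀ y, |W y - p| ≤ |y| / 4 := by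
    intro y
    rcases le_or_gt 0 y with hy | hy
    · have := norm_image_sub_le_of_norm_deriv_le_segment'
        (f := fun z => W z - p) (f' := fun z => W z * (1 - W z)) (a := 0) (b := y) (C := 1 / 4)
        (fun x _ => (hL'deriv x).hasDerivWithinAt) (fun x _ => hW14 x) y (right_mem_Icc.2 hy)
      simp only [Real.norm_eq_abs] at this
      rw [hL'0, sub_zero] at this
      calc |W y - p| ≤ 1 / 4 * (y - 0) := this
        _ = |y| / 4 := by rw [abs_of_nonneg hy]; ring
    · have := norm_image_sub_le_of_norm_deriv_le_segment'
        (f := fun z => W z - p) (f' := fun z => W z * (1 - W z)) (a := y) (b := 0) (C := 1 / 4)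
        (fun x _ => (hL'deriv x).hasDerivWithinAt) (fun x _ => hW14 x) 0
        (right_mem_Icc.2 hy.le)
      simp only [Real.norm_eq_abs] at this
      rw [hL'0, zero_sub, abs_neg] at this
      calc |W y - p| ≤ 1 / 4 * (0 - y) := this
        _ = |y| / 4 := by rw [abs_of_neg hy]; ring
  set G : ℝ → ℝ := fun y => L y - y ^ 2 / 8 with hG
  have hGderiv : ∀ y, HasDerivAt G (W y - p - y / 4) y := by
    intro y
    have hsq : HasDerivAt (fun z : ℝ => z ^ 2 / 8) (y / 4) y := by
      have := (hasDerivAt_pow 2 y).div_const 8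
      simpa using this.congr_deriv (by ring)
    exact (hLderiv y).sub hsq
  have hG0 : G 0 = 0 := by
    simp [hG, hL, hD0]
  have key : ∀ y, G y ≤ 0 := by
    intro y
    rcases le_or_gt 0 y with hy | hy
    · have hanti : AntitoneOn G (Icc 0 y) := by
        apply antitoneOn_of_deriv_nonpos (convex_Icc 0 y)
        · exact fun x _ => (hGderiv x).continuousAt.continuousWithinAt
        · intro x hx
          exact ((hGderiv x).differentiableAt).differentiableWithinAt
        · intro x hx
          rw [(hGderiv x).deriv]
          rw [interior_Icc] at hx
          have hx0 : 0 < x := hx.1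
          have := (abs_le.1 (hL'bound x)).2
          rw [abs_of_pos hx0] at this
          linarith
      have := hanti (left_mem_Icc.2 hy) (right_mem_Icc.2 hy) hy
      rwa [hG0] at this
    · have hmono : MonotoneOn G (Icc y 0) := by
        apply monotoneOn_of_deriv_nonneg (convex_Icc y 0)
        · exact fun x _ => (hGderiv x).continuousAt.continuousWithinAt
        · intro x hx
          exact ((hGderiv x).differentiableAt).differentiableWithinAt
        · intro x hx
          rw [(hGderiv x).deriv]
          rw [interior_Icc] at hx
          have hx0 : x < 0 := hx.2
          have := (abs_le.1 (hL'bound x)).1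
          rw [abs_of_neg hx0] at this
          linarith
      have := hmono (left_mem_Icc.2 hy.le) (right_mem_Icc.2 hy.le) hy.le
      rwa [hG0] at this
  have := key h
  simp only [hG, hL, sub_nonpos] at this
  exact this

/-! ### An a.e. infimum defined via rationals -/

noncomputable def aeInf {β : Type*} [MeasurableSpace β] (ν : Measure β) (Y : β → ℝ) (L : ℝ) : ℝ :=
  sSup (insert L {r : ℝ | ∃ q : ℚ, (q : ℝ) = r ∧ ν {z | Y z < (q : ℝ)} = 0})

section aeInf
variable {β : Type*} [MeasurableSpace β] {ν : Measure β} [IsProbabilityMeasure ν]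
  {Y : β → ℝ} {L M : ℝ}

lemma aeInf_bddAbove (hYM : ∀ z, Y z ≤ M) :
    ∀ r ∈ insert L {r : ℝ | ∃ q : ℚ, (q : ℝ) = r ∧ ν {z | Y z < (q : ℝ)} = 0}, r ≤ max L M := by
  rintro r (rfl | ⟨q, rfl, hq⟩)
  · exact le_max_left _ _
  · refine le_trans ?_ (le_max_right L M)
    by_contra hlt
    push_neg at hlt
    have : {z | Y z < (q : ℝ)} = Set.univ := by
      ext z; simpa using lt_of_le_of_lt (hYM z) hlt
    rw [this] at hq
    simp [measure_univ] at hq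

lemma le_aeInf (hYM : ∀ z, Y z ≤ M) {r : ℝ} (h : ∀ᵐ z ∂ν, r ≤ Y z) : r ≤ aeInf ν Y L := by
  have hbdd : BddAbove (insert L {r : ℝ | ∃ q : ℚ, (q : ℝ) = r ∧ ν {z | Y z < (q : ℝ)} = 0}) :=
    ⟨max L M, fun x hx => aeInf_bddAbove hYM x hx⟩
  refine le_of_forall_lt fun s hs => ?_
  obtain ⟨q, hq1, hq2⟩ := exists_rat_btwn hs
  have hnull : ν {z | Y z < (q : ℝ)} = 0 := by
    refine measure_mono_null ?_ (ae_iff.1 h)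
    intro z hz
    simp only [Set.mem_setOf_eq, not_le]
    exact lt_trans hz hq2
  calc s < (q : ℝ) := hq1
    _ ≤ aeInf ν Y L := le_csSup hbdd (Set.mem_insert_of_mem _ ⟨q, rfl, hnull⟩)

lemma aeInf_le_ae (hLY : ∀ z, L ≤ Y z) : ∀ᵐ z ∂ν, aeInf ν Y L ≤ Y z := by
  have hq : ∀ᵐ z ∂ν, ∀ q : ℚ, ν {z' | Y z' < (q : ℝ)} = 0 → (q : ℝ) ≤ Y z := by
    rw [ae_all_iff]
    intro q
    by_cases hq : ν {z' | Y z' < (q : ℝ)} = 0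
    · have : ∀ᵐ z ∂ν, ¬ (Y z < (q : ℝ)) := by
        rw [ae_iff]; simpa using hq
      filter_upwards [this] with z hz _
      exact not_lt.1 hz
    · filter_upwards with z hcond
      exact absurd hcond hq
  filter_upwards [hq] with z hz
  refine csSup_le (Set.insert_nonempty _ _) ?_
  rintro r (rfl | ⟨q, rfl, hnull⟩)
  · exact hLY z
  · exact hz q hnull

end aeInf

/-! ### Hoeffding's lemma, a.e. oscillation version -/

theorem hoeffding_ae {β : Type*} [MeasurableSpace β] (ν : Measure β) [IsProbabilityMeasure ν]
    {Y : β → ℝ} (hY : Measurable Y) {K : ℝ} (hK : ∀ z, |Y z| ≤ K)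
    {c : ℝ} (hc : 0 ≤ c) (hosc : ∀ᵐ p ∂(ν.prod ν), Y p.1 - Y p.2 ≤ c)
    (hmean : ∫ z, Y z ∂ν = 0) (t : ℝ) :
    ∫ z, Real.exp (t * Y z) ∂ν ≤ Real.exp (t ^ 2 * c ^ 2 / 8) := by
  have hLY : ∀ z, -K ≤ Y z := fun z => (abs_le.1 (hK z)).1
  have hYM : ∀ z, Y z ≤ K := fun z => (abs_le.1 (hK z)).2
  have hYint : Integrable Y ν :=
    integrable_of_abs_le hY.aestronglyMeasurable (Filter.Eventually.of_forall hK)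
  set a := aeInf ν Y (-K) with ha
  have haY : ∀ᵐ z ∂ν, a ≤ Y z := aeInf_le_ae hLY
  have hYb : ∀ᵐ z ∂ν, Y z ≤ a + c := by
    have h2 := Measure.ae_ae_of_ae_prod hosc
    filter_upwards [h2] with z hz
    have : Y z - c ≤ a := by
      refine le_aeInf hYM ?_
      filter_upwards [hz] with z' hz'
      linarith
    linarith
  have ha0 : a ≤ 0 := by
    have h1 : ∫ _, a ∂ν ≤ ∫ z, Y z ∂ν := integral_mono_ae (integrable_const a) hYint haY
    rwa [hmean, integral_const, probReal_univ, one_smul] at h1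
  have hb0 : 0 ≤ a + c := by
    have h1 : ∫ z, Y z ∂ν ≤ ∫ _, a + c ∂ν := integral_mono_ae hYint (integrable_const _) hYb
    rwa [hmean, integral_const, probReal_univ, one_smul] at h1
  rcases eq_or_lt_of_le hc with hc0 | hc0
  · -- degenerate case c = 0
    have haz : a = 0 := le_antisymm ha0 (by linarith)
    have hY0 : ∀ᵐ z ∂ν, Y z = 0 := by
      filter_upwards [haY, hYb] with z h1 h2
      rw [haz] at h1; rw [haz, ← hc0] at h2
      linarith
    have : ∫ z, Real.exp (t * Y z) ∂ν = 1 := by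
      rw [show (1 : ℝ) = ∫ _, (1 : ℝ) ∂ν by simp]
      refine integral_congr_ae ?_
      filter_upwards [hY0] with z hz
      simp [hz]
    rw [this, ← Real.exp_zero]
    apply Real.exp_le_exp.2
    positivity
  · set b := a + c with hb
    set p := -a / c with hp
    have hp0 : 0 ≤ p := div_nonneg (neg_nonneg.2 ha0) hc0.le
    have hp1 : p ≤ 1 := by
      rw [hp, div_le_one hc0]; linarith
    have hconv : ∀ᵐ z ∂ν, Real.exp (t * Y z) ≤
        ((b - Y z) / c) * Real.exp (t * a) + ((Y z - a) / c) * Real.exp (t * b) := by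
      filter_upwards [haY, hYb] with z h1 h2
      have hθ0 : 0 ≤ (b - Y z) / c := div_nonneg (by linarith) hc0.le
      have hθ0' : 0 ≤ (Y z - a) / c := div_nonneg (by linarith) hc0.le
      have hsum : (b - Y z) / c + (Y z - a) / c = 1 := by
        rw [← add_div, show b - Y z + (Y z - a) = c by rw [hb]; ring, div_self hc0.ne']
      have hcvx := convexOn_exp.2 (Set.mem_univ (t * a)) (Set.mem_univ (t * b)) hθ0 hθ0' hsum
      simp only [smul_eq_mul] at hcvx
      have harg : (b - Y z) / c * (t * a) + (Y z - a) / c * (t * b) = t * Y z := by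
        field_simp
        rw [hb]; ring
      rwa [harg] at hcvx
    have hint1 : Integrable (fun z => Real.exp (t * Y z)) ν := by
      refine integrable_of_abs_le (K := Real.exp (|t| * K)) (Real.measurable_exp.comp (hY.const_mul t)).aestronglyMeasurable
        (Filter.Eventually.of_forall fun z => ?_)
      rw [abs_of_pos (Real.exp_pos _)]
      apply Real.exp_le_exp.2
      calc t * Y z ≤ |t * Y z| := le_abs_self _
        _ = |t| * |Y z| := abs_mul _ _
        _ ≤ |t| * K := by
            refine mul_le_mul_of_nonneg_left (hK z) (abs_nonneg t)
    have hint2 : Integrable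
        (fun z => ((b - Y z) / c) * Real.exp (t * a) + ((Y z - a) / c) * Real.exp (t * b)) ν := by
      apply Integrable.add
      · exact (((integrable_const b).sub hYint).div_const c).mul_const _
      · exact (((hYint.sub (integrable_const a)).div_const c)).mul_const _
    have key : ∫ z, Real.exp (t * Y z) ∂ν ≤
        (b * Real.exp (t * a) - a * Real.exp (t * b)) / c := by
      refine le_trans (integral_mono_ae hint1 hint2 hconv) (le_of_eq ?_)
      have hre : (fun z => ((b - Y z) / c) * Real.exp (t * a) + ((Y z - a) / c) * Real.exp (t * b))
          = fun z => Y z * ((Real.exp (t * b) - Real.exp (t * a)) / c)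
            + (b * Real.exp (t * a) - a * Real.exp (t * b)) / c := by
        funext z; ring
      rw [hre, integral_add ((hYint.mul_const _)) (integrable_const _), integral_mul_const,
        hmean, integral_const, probReal_univ, one_smul, zero_mul, zero_add]
    have hD : (0 : ℝ) < 1 - p + p * Real.exp (t * c) := by
      rcases eq_or_lt_of_le hp1 with h1 | h1
      · rw [h1]; simpa using Real.exp_pos (t * c)
      · have h2 : 0 ≤ p * Real.exp (t * c) := mul_nonneg hp0 (Real.exp_pos _).le
        linarith
    have hfinal : (b * Real.exp (t * a) - a * Real.exp (t * b)) / c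
        = Real.exp (-(p * (t * c)) + Real.log (1 - p + p * Real.exp (t * c))) := by
      rw [Real.exp_add, Real.exp_log hD]
      have hea : Real.exp (-(p * (t * c))) = Real.exp (t * a) := by
        congr 1
        rw [hp]
        field_simp
      rw [hea, eq_comm, eq_div_iff hc0.ne', hb]
      have htb : Real.exp (t * (a + c)) = Real.exp (t * a) * Real.exp (t * c) := by
        rw [← Real.exp_add]; congr 1; ring
      rw [htb, hp]
      field_simp
      ring
    calc ∫ z, Real.exp (t * Y z) ∂ν
        ≤ (b * Real.exp (t * a) - a * Real.exp (t * b)) / c := key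
      _ = Real.exp (-(p * (t * c)) + Real.log (1 - p + p * Real.exp (t * c))) := hfinal
      _ ≤ Real.exp ((t * c) ^ 2 / 8) := Real.exp_le_exp.2 (logMgfBound hp0 hp1 (t * c))
      _ = Real.exp (t ^ 2 * c ^ 2 / 8) := by rw [mul_pow]


section prodPlumbing
variable {Ω : Type*} [MeasurableSpace Ω] {n : ℕ} (μ : Fin n → Measure Ω)
  [∀ i, IsProbabilityMeasure (μ i)]

lemma mp_update (i : Fin n) :
    MeasurePreserving (fun p : (Fin n → Ω) × Ω => Function.update p.1 i p.2)
      ((Measure.pi μ).prod (μ i)) (Measure.pi μ) := by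
  refine ⟨measurable_update', ?_⟩
  refine (Measure.pi_eq fun s hs => ?_).symm
  rw [Measure.map_apply measurable_update' (MeasurableSet.univ_pi hs)]
  have hpre : (fun p : (Fin n → Ω) × Ω => Function.update p.1 i p.2) ⁻¹' (Set.pi Set.univ s)
      = (Set.pi Set.univ (Function.update s i Set.univ)) ×ˢ (s i) := by
    ext ⟨x, v⟩
    simp only [Set.mem_preimage, Set.mem_pi, Set.mem_univ, true_implies, Set.mem_prod]
    constructor
    · intro hmem
      refine ⟨fun j => ?_, by simpa using hmem i⟩
      rcases eq_or_ne j i with rfl | hj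
      · simp
      · have := hmem j
        rw [Function.update_of_ne hj] at this
        rwa [Function.update_of_ne hj]
    · rintro ⟨h1, h2⟩ j
      rcases eq_or_ne j i with rfl | hj
      · simpa using h2
      · have := h1 j
        rw [Function.update_of_ne hj] at this
        rwa [Function.update_of_ne hj]
  rw [hpre, Measure.prod_prod, Measure.pi_pi]
  have hfun : (fun j => μ j (Function.update s i Set.univ j))
      = Function.update (fun j => μ j (s j)) i (μ i Set.univ) := by
    funext j
    rcases eq_or_ne j i with rfl | hj
    · simp
    · rw [Function.update_of_ne hj, Function.update_of_ne hj]
  rw [hfun, Finset.prod_update_of_mem (Finset.mem_univ i), measure_univ, one_mul,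
    Finset.sdiff_singleton_eq_erase, mul_comm]
  exact Finset.mul_prod_erase Finset.univ (fun j => μ j (s j)) (Finset.mem_univ i)

/-- transfer an a.e. property on `Measure.pi μ` to updated points -/
lemma ae_update_of_ae (i : Fin n) {Q : (Fin n → Ω) → Prop}
    (h : ∀ᵐ x ∂(Measure.pi μ), Q x) :
    ∀ᵐ p ∂((Measure.pi μ).prod (μ i)), Q (Function.update p.1 i p.2) :=
  (mp_update μ i).quasiMeasurePreserving.tendsto_ae.eventually h

lemma ae_of_ae_update (i : Fin n) {Q : (Fin n → Ω) → Prop}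
    (hQ : MeasurableSet {x | Q x})
    (h : ∀ᵐ p ∂((Measure.pi μ).prod (μ i)), Q (Function.update p.1 i p.2)) :
    ∀ᵐ x ∂(Measure.pi μ), Q x := by
  rw [← (mp_update μ i).map_eq]
  exact (MeasureTheory.ae_map_iff measurable_update'.aemeasurable hQ).2 h

lemma ae_fst_pi (i : Fin n) {Q : (Fin n → Ω) → Prop}
    (h : ∀ᵐ x ∂(Measure.pi μ), Q x) :
    ∀ᵐ p ∂((Measure.pi μ).prod (μ i)), Q p.1 := by
  have hmp : MeasurePreserving (Prod.fst : (Fin n → Ω) × Ω → (Fin n → Ω))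
      ((Measure.pi μ).prod (μ i)) (Measure.pi μ) :=
    ⟨measurable_fst, by simp [Measure.map_fst_prod]⟩
  exact hmp.quasiMeasurePreserving.tendsto_ae.eventually h

/-- rearrangement `((x,w),v) ↦ ((x,v),w)` is measure preserving. -/
lemma mp_rearrange (i j : Fin n) :
    MeasurePreserving (fun q : ((Fin n → Ω) × Ω) × Ω => ((q.1.1, q.2), q.1.2))
      (((Measure.pi μ).prod (μ j)).prod (μ i)) (((Measure.pi μ).prod (μ i)).prod (μ j)) := by
  have h1 := measurePreserving_prodAssoc (Measure.pi μ) (μ j) (μ i)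
  have h2 : MeasurePreserving (Prod.map (id : (Fin n → Ω) → _) (Prod.swap : Ω × Ω → Ω × Ω))
      ((Measure.pi μ).prod ((μ j).prod (μ i))) ((Measure.pi μ).prod ((μ i).prod (μ j))) :=
    (MeasurePreserving.id _).prod Measure.measurePreserving_swap
  have h3 := (measurePreserving_prodAssoc (Measure.pi μ) (μ i) (μ j)).symm
    (MeasurableEquiv.prodAssoc)
  exact h3.comp (h2.comp h1)

end prodPlumbing

/-! ### The coordinatewise essential infimum operator -/

section coordInf
variable {Ω : Type*} [MeasurableSpace Ω] {n : ℕ} (μ : Fin n → Measure Ω)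
  [∀ i, IsProbabilityMeasure (μ i)]

noncomputable def coordInf (g : (Fin n → Ω) → ℝ) (L : ℝ) (i : Fin n) (x : Fin n → Ω) : ℝ :=
  aeInf (μ i) (fun v => g (Function.update x i v)) L

variable {g : (Fin n → Ω) → ℝ} {L M : ℝ}

lemma coordInf_update (i : Fin n) (x : Fin n → Ω) (v : Ω) :
    coordInf μ g L i (Function.update x i v) = coordInf μ g L i x := by
  unfold coordInf
  congr 1
  funext w
  rw [Function.update_idem]

lemma le_coordInf (hM : ∀ x, g x ≤ M) {i : Fin n} {x : Fin n → Ω} {r : ℝ}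
    (h : ∀ᵐ v ∂(μ i), r ≤ g (Function.update x i v)) : r ≤ coordInf μ g L i x :=
  le_aeInf (M := M) (fun v => hM _) h

lemma coordInf_le_ae (hL : ∀ x, L ≤ g x) (i : Fin n) (x : Fin n → Ω) :
    ∀ᵐ v ∂(μ i), coordInf μ g L i x ≤ g (Function.update x i v) :=
  aeInf_le_ae (fun v => hL _)

lemma measurable_coordInf (hg : Measurable g) (hM : ∀ x, g x ≤ M) (i : Fin n) :
    Measurable (coordInf μ g L i) := by
  apply measurable_of_Ioi
  intro t
  have hbdd : ∀ x : Fin n → Ω, BddAbove (insert L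
      {r : ℝ | ∃ q : ℚ, (q : ℝ) = r ∧ (μ i) {v | g (Function.update x i v) < (q : ℝ)} = 0}) :=
    fun x => ⟨max L M, fun r hr =>
      aeInf_bddAbove (ν := μ i) (Y := fun v => g (Function.update x i v)) (fun v => hM _) r hr⟩
  have hset : coordInf μ g L i ⁻¹' (Set.Ioi t) =
      (if t < L then (Set.univ : Set (Fin n → Ω)) else ∅) ∪
      ⋃ q : ℚ, (if t < (q : ℝ) then
        {x | (μ i) {v | g (Function.update x i v) < (q : ℝ)} = 0} else ∅) := by
    ext x
    simp only [Set.mem_preimage, Set.mem_Ioi, Set.mem_union, Set.mem_iUnion]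
    constructor
    · intro hx
      obtain ⟨r, hrmem, hrt⟩ :=
        (lt_csSup_iff (hbdd x) (Set.insert_nonempty _ _)).1 hx
      rcases hrmem with rfl | ⟨q, rfl, hq⟩
      · left; simp [hrt]
      · right; exact ⟨q, by simp [hrt, hq]⟩
    · intro hx
      rcases hx with hx | ⟨q, hq⟩
      · by_cases htL : t < L
        · exact lt_of_lt_of_le htL (le_csSup (hbdd x) (Set.mem_insert _ _))
        · simp [htL] at hx
      · by_cases htq : t < (q : ℝ)
        · simp only [if_pos htq, Set.mem_setOf_eq] at hq
          exact lt_of_lt_of_le htq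
            (le_csSup (hbdd x) (Set.mem_insert_of_mem _ ⟨q, rfl, hq⟩))
        · simp [htq] at hq
  rw [hset]
  apply MeasurableSet.union
  · split <;> simp
  · apply MeasurableSet.iUnion
    intro q
    split
    · have hAq : MeasurableSet {p : (Fin n → Ω) × Ω | g (Function.update p.1 i p.2) < (q : ℝ)} :=
        measurableSet_lt (hg.comp measurable_update') measurable_const
      have hmeas := measurable_measure_prodMk_left (ν := μ i) hAq
      exact hmeas (measurableSet_singleton 0)
    · simp

/-- Transfer of coordinate-oscillation bounds to `coordInf`. -/
lemma osc_coordInf (hg : Measurable g) (hL : ∀ x, L ≤ g x) (hM : ∀ x, g x ≤ M)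
    {i j : Fin n} (hij : i ≠ j) {cj : ℝ}
    (hosc : ∀ᵐ p ∂((Measure.pi μ).prod (μ j)),
      |g (Function.update p.1 j p.2) - g p.1| ≤ cj) :
    ∀ᵐ p ∂((Measure.pi μ).prod (μ j)),
      |coordInf μ g L i (Function.update p.1 j p.2) - coordInf μ g L i p.1| ≤ cj := by
  -- iterated version of the hypothesis at perturbed points
  have h0 : ∀ᵐ q ∂((((Measure.pi μ).prod (μ j))).prod (μ i)),
      |g (Function.update (Function.update q.1.1 i q.2) j q.1.2)
        - g (Function.update q.1.1 i q.2)| ≤ cj := by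
    have h1 : ∀ᵐ p ∂(((Measure.pi μ).prod (μ i)).prod (μ j)),
        |g (Function.update (Function.update p.1.1 i p.1.2) j p.2)
          - g (Function.update p.1.1 i p.1.2)| ≤ cj := by
      have hmp := (mp_update μ i).prod (MeasurePreserving.id (μ j))
      exact hmp.quasiMeasurePreserving.tendsto_ae.eventually hosc
    exact (mp_rearrange μ i j).quasiMeasurePreserving.tendsto_ae.eventually h1
  have h2 := Measure.ae_ae_of_ae_prod h0
  filter_upwards [h2] with p hp
  have hA2x : ∀ᵐ v ∂(μ i), coordInf μ g L i p.1 ≤ g (Function.update p.1 i v) :=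
    coordInf_le_ae μ hL i p.1
  have hA2y : ∀ᵐ v ∂(μ i),
      coordInf μ g L i (Function.update p.1 j p.2)
        ≤ g (Function.update (Function.update p.1 j p.2) i v) :=
    coordInf_le_ae μ hL i _
  have hcomm : ∀ v : Ω, Function.update (Function.update p.1 i v) j p.2
      = Function.update (Function.update p.1 j p.2) i v :=
    fun v => Function.update_comm hij _ _ _
  rw [abs_le]
  constructor
  · have hkey : coordInf μ g L i p.1 - cj ≤ coordInf μ g L i (Function.update p.1 j p.2) := by
      refine le_coordInf μ hM ?_
      filter_upwards [hp, hA2x] with v hv1 hv2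
      rw [← hcomm v]
      have := (abs_le.1 hv1).1
      linarith
    linarith
  · have hkey : coordInf μ g L i (Function.update p.1 j p.2) - cj ≤ coordInf μ g L i p.1 := by
      refine le_coordInf μ hM ?_
      filter_upwards [hp, hA2y] with v hv1 hv2
      rw [← hcomm v] at hv2
      have := (abs_le.1 hv1).2
      linarith
    linarith

end coordInf

/-! ### The truncation cascade -/

section cascade
variable {Ω : Type*} [MeasurableSpace Ω] {n : ℕ}

noncomputable def distC (c : Fin n → ℝ) (x y : Fin n → Ω) : ℝ := ∑ i, if x i ≠ y i then c i else 0

variable {c : Fin n → ℝ} {L M : ℝ}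

lemma distC_nonneg (hc : ∀ i, 0 ≤ c i) (x y : Fin n → Ω) : 0 ≤ distC c x y :=
  Finset.sum_nonneg fun i _ => by split <;> first | exact hc i | exact le_rfl

lemma distC_le_sum (hc : ∀ i, 0 ≤ c i) (x y : Fin n → Ω) : distC c x y ≤ ∑ i, c i :=
  Finset.sum_le_sum fun i _ => by split <;> first | exact le_rfl | exact hc i

lemma distC_update_le (hc : ∀ i, 0 ≤ c i) (x y : Fin n → Ω) (i : Fin n) (v : Ω) :
    distC c x (Function.update y i v) ≤ distC c x y + c i := by
  unfold distC
  have hL : (∑ j, if x j ≠ Function.update y i v j then c j else 0)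
      = (∑ j ∈ Finset.univ.erase i, if x j ≠ y j then c j else 0)
        + (if x i ≠ v then c i else 0) := by
    rw [← Finset.sum_erase_add Finset.univ _ (Finset.mem_univ i)]
    congr 1
    · refine Finset.sum_congr rfl fun j hj => ?_
      rw [Function.update_of_ne (Finset.ne_of_mem_erase hj)]
    · rw [Function.update_self]
  have hR : (∑ j, if x j ≠ y j then c j else 0)
      = (∑ j ∈ Finset.univ.erase i, if x j ≠ y j then c j else 0)
        + (if x i ≠ y i then c i else 0) :=
    (Finset.sum_erase_add _ _ (Finset.mem_univ i)).symm
  rw [hL, hR]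
  have h1 : (if x i ≠ v then c i else 0) ≤ c i := by split <;> first | exact le_rfl | exact hc i
  have h2 : (0 : ℝ) ≤ (if x i ≠ y i then c i else 0) := by split <;> first | exact hc i | exact le_rfl
  linarith

lemma distC_self_update (hc : ∀ i, 0 ≤ c i) (x : Fin n → Ω) (i : Fin n) (v : Ω) :
    distC c x (Function.update x i v) ≤ c i := by
  unfold distC
  rw [← Finset.sum_erase_add Finset.univ _ (Finset.mem_univ i)]
  have hz : (∑ j ∈ Finset.univ.erase i, if x j ≠ Function.update x i v j then c j else 0) = 0 := by
    refine Finset.sum_eq_zero fun j hj => ?_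
    rw [Function.update_of_ne (Finset.ne_of_mem_erase hj)]
    simp
  rw [hz, zero_add, Function.update_self]
  split <;> first | exact le_rfl | exact hc i

variable (μ : Fin n → Measure Ω) [∀ i, IsProbabilityMeasure (μ i)]

structure GoodExt (c : Fin n → ℝ) (L M : ℝ) (f : (Fin n → Ω) → ℝ) (Ξ : Set (Fin n → Ω))
    (g : (Fin n → Ω) → ℝ) : Prop where
  meas : Measurable g
  lb : ∀ x, L ≤ g x
  ub : ∀ x, g x ≤ M
  lower : ∀ x' ∈ Ξ, ∀ y, f x' - distC c x' y ≤ g y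
  eqOn : ∀ x ∈ Ξ, g x = f x

noncomputable def stepF (c : Fin n → ℝ) (L : ℝ) (i : Fin n) (g : (Fin n → Ω) → ℝ) :
    (Fin n → Ω) → ℝ :=
  fun x => min (g x) (coordInf μ g L i x + c i)

def OscP (c : Fin n → ℝ) (i : Fin n) (g : (Fin n → Ω) → ℝ) : Prop :=
  ∀ᵐ p ∂((Measure.pi μ).prod (μ i)), |g (Function.update p.1 i p.2) - g p.1| ≤ c i

variable {f : (Fin n → Ω) → ℝ} {Ξ : Set (Fin n → Ω)}

lemma stepF_good (hc : ∀ i, 0 ≤ c i) {g : (Fin n → Ω) → ℝ}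
    (hg : GoodExt c L M f Ξ g) (i : Fin n) : GoodExt c L M f Ξ (stepF μ c L i g) := by
  constructor
  · exact hg.meas.min ((measurable_coordInf μ hg.meas hg.ub i).add_const _)
  · intro x
    refine le_min (hg.lb x) ?_
    have : L ≤ coordInf μ g L i x :=
      le_coordInf μ hg.ub (Filter.Eventually.of_forall fun v => hg.lb _)
    linarith [hc i]
  · exact fun x => (min_le_left _ _).trans (hg.ub x)
  · intro x' hx' y
    refine le_min (hg.lower x' hx' y) ?_
    have : f x' - distC c x' y - c i ≤ coordInf μ g L i y := by
      refine le_coordInf μ hg.ub (Filter.Eventually.of_forall fun v => ?_)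
      have h1 := hg.lower x' hx' (Function.update y i v)
      have h2 := distC_update_le hc x' y i v
      linarith
    linarith
  · intro x hx
    have hI : f x - c i ≤ coordInf μ g L i x := by
      refine le_coordInf μ hg.ub (Filter.Eventually.of_forall fun v => ?_)
      have h1 := hg.lower x hx (Function.update x i v)
      have h2 := distC_self_update hc x i v
      linarith
    have : g x ≤ coordInf μ g L i x + c i := by
      rw [hg.eqOn x hx]; linarith
    rw [stepF, min_eq_left this]
    exact hg.eqOn x hx

lemma stepF_osc_self (hc : ∀ i, 0 ≤ c i) {g : (Fin n → Ω) → ℝ}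
    (hg : GoodExt c L M f Ξ g) (i : Fin n) : OscP μ c i (stepF μ c L i g) := by
  have hIg : ∀ᵐ y ∂(Measure.pi μ), coordInf μ g L i y ≤ g y := by
    refine ae_of_ae_update μ i (Q := fun y => coordInf μ g L i y ≤ g y)
      (measurableSet_le (measurable_coordInf μ hg.meas hg.ub i) hg.meas) ?_
    have hjoint : ∀ᵐ p ∂((Measure.pi μ).prod (μ i)),
        coordInf μ g L i p.1 ≤ g (Function.update p.1 i p.2) := by
      refine (Measure.ae_prod_iff_ae_ae ?_).2 ?_
      · exact measurableSet_le ((measurable_coordInf μ hg.meas hg.ub i).comp measurable_fst)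
          (hg.meas.comp measurable_update')
      · exact Filter.Eventually.of_forall fun x => coordInf_le_ae μ hg.lb i x
    filter_upwards [hjoint] with p hp
    rwa [coordInf_update]
  filter_upwards [ae_update_of_ae μ i hIg, ae_fst_pi μ i hIg] with p h1 h2
  have e1 : coordInf μ g L i (Function.update p.1 i p.2) = coordInf μ g L i p.1 :=
    coordInf_update μ i p.1 p.2
  have h1' : coordInf μ g L i p.1 ≤ g (Function.update p.1 i p.2) := by
    rw [← e1]; exact h1
  simp only [stepF]
  rw [e1]
  have m1 := min_le_right (g (Function.update p.1 i p.2)) (coordInf μ g L i p.1 + c i)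
  have m2 : coordInf μ g L i p.1
      ≤ min (g (Function.update p.1 i p.2)) (coordInf μ g L i p.1 + c i) :=
    le_min h1' (by linarith [hc i])
  have m3 := min_le_right (g p.1) (coordInf μ g L i p.1 + c i)
  have m4 : coordInf μ g L i p.1 ≤ min (g p.1) (coordInf μ g L i p.1 + c i) :=
    le_min h2 (by linarith [hc i])
  rw [abs_le]
  constructor <;> linarith

lemma stepF_osc_other (hc : ∀ i, 0 ≤ c i) {g : (Fin n → Ω) → ℝ}
    (hg : GoodExt c L M f Ξ g) {i j : Fin n} (hij : i ≠ j)
    (hosc : OscP μ c j g) : OscP μ c j (stepF μ c L i g) := by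
  have h2 := osc_coordInf μ hg.meas hg.lb hg.ub hij hosc
  filter_upwards [hosc, h2] with p h1 h2'
  have hmm := abs_min_sub_min_le_max (g (Function.update p.1 j p.2))
    (coordInf μ g L i (Function.update p.1 j p.2) + c i)
    (g p.1) (coordInf μ g L i p.1 + c i)
  refine le_trans hmm (max_le h1 ?_)
  rwa [add_sub_add_right_eq_sub]

noncomputable def cascade (c : Fin n → ℝ) (L : ℝ) (g0 : (Fin n → Ω) → ℝ) :
    ℕ → ((Fin n → Ω) → ℝ)
  | 0 => g0
  | (k + 1) => if h : k < n then stepF μ c L ⟨k, h⟩ (cascade c L g0 k) else cascade c L g0 k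

lemma cascade_good (hc : ∀ i, 0 ≤ c i) {g0 : (Fin n → Ω) → ℝ}
    (hg0 : GoodExt c L M f Ξ g0) : ∀ k, GoodExt c L M f Ξ (cascade μ c L g0 k) := by
  intro k
  induction k with
  | zero => exact hg0
  | succ k ih =>
    rw [cascade]
    split
    · exact stepF_good μ hc ih _
    · exact ih

lemma cascade_osc (hc : ∀ i, 0 ≤ c i) {g0 : (Fin n → Ω) → ℝ}
    (hg0 : GoodExt c L M f Ξ g0) :
    ∀ k, ∀ i : Fin n, (i : ℕ) < k → OscP μ c i (cascade μ c L g0 k) := by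
  intro k
  induction k with
  | zero => intro i hi; omega
  | succ k ih =>
    intro i hi
    by_cases hk : k < n
    · rw [cascade, dif_pos hk]
      rcases eq_or_ne (i : ℕ) k with hik | hik
      · have : i = ⟨k, hk⟩ := Fin.ext hik
        rw [this]
        exact stepF_osc_self μ hc (cascade_good μ hc hg0 k) _
      · have hlt : (i : ℕ) < k := by omega
        exact stepF_osc_other μ hc (cascade_good μ hc hg0 k)
          (by exact fun hcon => hik (by rw [← hcon])) (ih i hlt)
    · rw [cascade, dif_neg hk]
      exact ih i (by have := i.isLt; omega)

end cascade

/-! ### Tensorized mgf bound (McDiarmid's lemma core) -/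

theorem mgf_pi {Ω : Type*} [MeasurableSpace Ω] :
    ∀ (n : ℕ) (μ : Fin n → Measure Ω), (∀ i, IsProbabilityMeasure (μ i)) →
    ∀ (F : (Fin n → Ω) → ℝ), Measurable F →
    ∀ (K : ℝ), (∀ x, |F x| ≤ K) →
    ∀ (c : Fin n → ℝ), (∀ i, 0 ≤ c i) →
    (∀ i, ∀ᵐ p ∂((Measure.pi μ).prod (μ i)),
      |F (Function.update p.1 i p.2) - F p.1| ≤ c i) →
    ∀ t : ℝ,
    ∫ x, Real.exp (t * (F x - ∫ y, F y ∂(Measure.pi μ))) ∂(Measure.pi μ)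
      ≤ Real.exp (t ^ 2 * (∑ i, (c i) ^ 2) / 8) := by
  intro n
  induction n with
  | zero =>
    intro μ hμ F hF K hK c hc hosc t
    haveI := hμ
    have hFc : F = fun _ => F (fun i => i.elim0) :=
      funext fun x => congrArg F (funext fun i => i.elim0)
    rw [hFc]
    simp
  | succ n ih =>
    intro μ hμ F hF K hK c hc hosc t
    haveI := hμ
    haveI : IsProbabilityMeasure (μ 0) := hμ 0
    set Pm := Measure.pi μ with hPm
    set μt : Fin n → Measure Ω := fun i => μ i.succ with hμt
    haveI hμt' : ∀ i, IsProbabilityMeasure (μt i) := fun i => hμ _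
    set ν := Measure.pi μt with hν
    set e : (Fin (n + 1) → Ω) ≃ᵐ Ω × (Fin n → Ω) :=
      MeasurableEquiv.piFinSuccAbove (fun _ : Fin (n + 1) => Ω) 0 with he
    have mp : MeasurePreserving e Pm ((μ 0).prod ν) := measurePreserving_piFinSuccAbove μ 0
    have hesymm : ∀ (z : Ω) (y : Fin n → Ω), e.symm (z, y) = Fin.cons z y := by
      intro z y
      show (Fin.insertNthEquiv (fun _ : Fin (n + 1) => Ω) 0) (z, y) = Fin.cons z y
      simp [Fin.insertNthEquiv, Fin.insertNth_zero']
    have hupd0 : ∀ (z w : Ω) (y : Fin n → Ω),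
        Function.update (Fin.cons z y : Fin (n + 1) → Ω) (0 : Fin (n + 1)) w = Fin.cons w y := by
      intro z w y
      funext j
      refine Fin.cases ?_ (fun k => ?_) j
      · simp
      · rw [Function.update_of_ne (Fin.succ_ne_zero k)]
        simp
    have hupds : ∀ (z w : Ω) (y : Fin n → Ω) (j : Fin n),
        Function.update (Fin.cons z y : Fin (n + 1) → Ω) j.succ w
          = Fin.cons z (Function.update y j w) := by
      intro z w y j
      funext k
      refine Fin.cases ?_ (fun l => ?_) k
      · rw [Function.update_of_ne (Fin.succ_ne_zero j).symm]
        simp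
      · rcases eq_or_ne l j with rfl | hlj
        · simp
        · rw [Function.update_of_ne (fun hcon => hlj (Fin.succ_injective _ hcon))]
          simp [Fin.cons_succ, Function.update_of_ne hlj]
    have hconsMeas : Measurable (fun p : Ω × (Fin n → Ω) => F (Fin.cons p.1 p.2)) := by
      apply hF.comp
      apply measurable_pi_lambda
      intro j
      refine Fin.cases ?_ (fun k => ?_) j
      · simp only [Fin.cons_zero]
        exact measurable_fst
      · simp only [Fin.cons_succ]
        exact (measurable_pi_apply k).comp measurable_snd
    set G : (Fin n → Ω) → ℝ := fun y => ∫ z, F (Fin.cons z y) ∂(μ 0) with hG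
    have hGmeas : Measurable G :=
      (hconsMeas.stronglyMeasurable.integral_prod_left').measurable
    have hGbd : ∀ y, |G y| ≤ K := by
      intro y
      have hb := norm_integral_le_of_norm_le_const (μ := μ 0)
        (f := fun z => F (Fin.cons z y)) (C := K)
        (Filter.Eventually.of_forall fun z => by
          simpa [Real.norm_eq_abs] using hK (Fin.cons z y))
      simpa [Real.norm_eq_abs, measure_univ] using hb
    have hconsYMeas : ∀ y : Fin n → Ω, Measurable fun z => F (Fin.cons z y) :=
      fun y => hconsMeas.comp (measurable_id.prodMk measurable_const)
    have hIntConsY : ∀ y, Integrable (fun z => F (Fin.cons z y)) (μ 0) := fun y =>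
      integrable_of_abs_le (hconsYMeas y).aestronglyMeasurable
        (Filter.Eventually.of_forall fun z => hK _)
    have hIntF : Integrable F Pm :=
      integrable_of_abs_le hF.aestronglyMeasurable (Filter.Eventually.of_forall hK)
    have hIntFe : Integrable (fun p : Ω × (Fin n → Ω) => F (e.symm p)) ((μ 0).prod ν) :=
      integrable_of_abs_le (hF.comp e.symm.measurable).aestronglyMeasurable
        (Filter.Eventually.of_forall fun p => hK _)
    have hEF : ∫ x, F x ∂Pm = ∫ y, G y ∂ν := by
      rw [← (mp.symm e).integral_comp' F, MeasureTheory.integral_prod_symm _ hIntFe]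
      refine integral_congr_ae (Filter.Eventually.of_forall fun y => ?_)
      dsimp only
      refine integral_congr_ae (Filter.Eventually.of_forall fun z => ?_)
      exact congrArg F (hesymm z y)
    -- oscillation for G
    have hoscG : ∀ j : Fin n, ∀ᵐ p ∂(ν.prod (μt j)),
        |G (Function.update p.1 j p.2) - G p.1| ≤ c j.succ := by
      intro j
      have hσ : MeasurePreserving
          (fun q : ((Fin n → Ω) × Ω) × Ω => ((q.2, q.1.1), q.1.2))
          ((ν.prod (μ j.succ)).prod (μ 0)) (((μ 0).prod ν).prod (μ j.succ)) := by
        have h1 := Measure.measurePreserving_swap (μ := ν.prod (μ j.succ)) (ν := μ 0)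
        have h2 := (measurePreserving_prodAssoc (μ 0) ν (μ j.succ)).symm
          MeasurableEquiv.prodAssoc
        exact h2.comp h1
      have hΛ : MeasurePreserving
          (fun q : ((Fin n → Ω) × Ω) × Ω => (e.symm (q.2, q.1.1), q.1.2))
          ((ν.prod (μ j.succ)).prod (μ 0)) (Pm.prod (μ j.succ)) := by
        have h3 := ((mp.symm e).prod (MeasurePreserving.id (μ j.succ)))
        exact h3.comp hσ
      have hpull := hΛ.quasiMeasurePreserving.tendsto_ae.eventually (hosc j.succ)
      have h2 := Measure.ae_ae_of_ae_prod hpull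
      filter_upwards [h2] with p hp
      have hGdiff : G (Function.update p.1 j p.2) - G p.1
          = ∫ z, (F (Fin.cons z (Function.update p.1 j p.2)) - F (Fin.cons z p.1)) ∂(μ 0) :=
        (integral_sub (hIntConsY _) (hIntConsY _)).symm
      rw [hGdiff, ← Real.norm_eq_abs]
      have hb := norm_integral_le_of_norm_le_const (μ := μ 0)
        (f := fun z => F (Fin.cons z (Function.update p.1 j p.2)) - F (Fin.cons z p.1))
        (C := c j.succ) ?_
      · simpa [measure_univ] using hb
      · filter_upwards [hp] with z hz
        rw [hesymm, hupds] at hz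
        simpa [Real.norm_eq_abs] using hz
    -- sectionwise Hoeffding bound
    have hsec : ∀ᵐ y ∂ν, ∫ z, Real.exp (t * (F (Fin.cons z y) - G y)) ∂(μ 0)
        ≤ Real.exp (t ^ 2 * (c 0) ^ 2 / 8) := by
      have hσ0 : MeasurePreserving
          (fun r : (Fin n → Ω) × (Ω × Ω) => ((r.2.1, r.1), r.2.2))
          (ν.prod ((μ 0).prod (μ 0))) (((μ 0).prod ν).prod (μ 0)) := by
        have h1 := (measurePreserving_prodAssoc ν (μ 0) (μ 0)).symm MeasurableEquiv.prodAssoc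
        have h2 := (Measure.measurePreserving_swap (μ := ν) (ν := μ 0)).prod
          (MeasurePreserving.id (μ 0))
        exact h2.comp h1
      have hΛ0 : MeasurePreserving
          (fun r : (Fin n → Ω) × (Ω × Ω) => (e.symm (r.2.1, r.1), r.2.2))
          (ν.prod ((μ 0).prod (μ 0))) (Pm.prod (μ 0)) := by
        have h3 := (mp.symm e).prod (MeasurePreserving.id (μ 0))
        exact h3.comp hσ0
      have hpull0 := hΛ0.quasiMeasurePreserving.tendsto_ae.eventually (hosc 0)
      have h20 := Measure.ae_ae_of_ae_prod hpull0
      filter_upwards [h20] with y hy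
      have hmean : ∫ z, (F (Fin.cons z y) - G y) ∂(μ 0) = 0 := by
        rw [integral_sub (hIntConsY y) (integrable_const _), integral_const, probReal_univ]
        simp [hG]
      have hosc' : ∀ᵐ q ∂((μ 0).prod (μ 0)),
          (F (Fin.cons q.1 y) - G y) - (F (Fin.cons q.2 y) - G y) ≤ c 0 := by
        filter_upwards [hy] with q hq
        rw [hesymm, hupd0] at hq
        have h1 := (abs_le.1 hq).1
        linarith
      have := hoeffding_ae (μ 0) (Y := fun z => F (Fin.cons z y) - G y)
        ((hconsYMeas y).sub measurable_const) (K := K + K)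
        (fun z => (abs_sub _ _).trans (add_le_add (hK _) (hGbd y)))
        (hc 0) hosc' hmean t
      exact this
    -- final chain
    have hIntExp : Integrable
        (fun p : Ω × (Fin n → Ω) => Real.exp (t * (F (e.symm p) - ∫ x, F x ∂Pm)))
        ((μ 0).prod ν) := by
      refine integrable_of_abs_le (K := Real.exp (|t| * (K + |∫ x, F x ∂Pm|)))
        ((Real.measurable_exp.comp
          (((hF.comp e.symm.measurable).sub measurable_const).const_mul t)).aestronglyMeasurable)
        (Filter.Eventually.of_forall fun p => ?_)
      rw [abs_of_pos (Real.exp_pos _)]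
      apply Real.exp_le_exp.2 (le_trans (le_abs_self _) ?_)
      rw [abs_mul]
      refine mul_le_mul_of_nonneg_left ?_ (abs_nonneg t)
      exact (abs_sub _ _).trans (add_le_add (hK _) le_rfl)
    have hExpGMeas : Measurable fun y => Real.exp (t * (G y - ∫ x, F x ∂Pm)) :=
      Real.measurable_exp.comp ((hGmeas.sub measurable_const).const_mul t)
    have hExpGInt : Integrable (fun y => Real.exp (t * (G y - ∫ x, F x ∂Pm))) ν := by
      refine integrable_of_abs_le (K := Real.exp (|t| * (K + |∫ x, F x ∂Pm|)))
        hExpGMeas.aestronglyMeasurable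
        (Filter.Eventually.of_forall fun y => ?_)
      rw [abs_of_pos (Real.exp_pos _)]
      apply Real.exp_le_exp.2 (le_trans (le_abs_self _) ?_)
      rw [abs_mul]
      refine mul_le_mul_of_nonneg_left ?_ (abs_nonneg t)
      exact (abs_sub _ _).trans (add_le_add (hGbd _) le_rfl)
    have hInnerMeas : Measurable fun y => ∫ z, Real.exp (t * (F (Fin.cons z y) - G y)) ∂(μ 0) := by
      have : Measurable fun p : Ω × (Fin n → Ω) =>
          Real.exp (t * (F (Fin.cons p.1 p.2) - G p.2)) :=
        Real.measurable_exp.comp ((hconsMeas.sub (hGmeas.comp measurable_snd)).const_mul t)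
      exact (this.stronglyMeasurable.integral_prod_left').measurable
    have hInnerBd : ∀ y, |∫ z, Real.exp (t * (F (Fin.cons z y) - G y)) ∂(μ 0)|
        ≤ Real.exp (|t| * (K + K)) := by
      intro y
      have hb := norm_integral_le_of_norm_le_const (μ := μ 0)
        (f := fun z => Real.exp (t * (F (Fin.cons z y) - G y)))
        (C := Real.exp (|t| * (K + K)))
        (Filter.Eventually.of_forall fun z => ?_)
      · simpa [Real.norm_eq_abs, measure_univ] using hb
      · rw [Real.norm_eq_abs, abs_of_pos (Real.exp_pos _)]
        apply Real.exp_le_exp.2 (le_trans (le_abs_self _) ?_)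
        rw [abs_mul]
        refine mul_le_mul_of_nonneg_left ?_ (abs_nonneg t)
        exact (abs_sub _ _).trans (add_le_add (hK _) (hGbd y))
    calc ∫ x, Real.exp (t * (F x - ∫ y, F y ∂Pm)) ∂Pm
        = ∫ p, Real.exp (t * (F (e.symm p) - ∫ x, F x ∂Pm)) ∂((μ 0).prod ν) :=
          ((mp.symm e).integral_comp' _).symm
      _ = ∫ y, ∫ z, Real.exp (t * (F (e.symm (z, y)) - ∫ x, F x ∂Pm)) ∂(μ 0) ∂ν :=
          MeasureTheory.integral_prod_symm _ hIntExp
      _ = ∫ y, (∫ z, Real.exp (t * (F (Fin.cons z y) - G y)) ∂(μ 0))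
            * Real.exp (t * (G y - ∫ x, F x ∂Pm)) ∂ν := by
          refine integral_congr_ae (Filter.Eventually.of_forall fun y => ?_)
          dsimp only
          rw [← integral_mul_const]
          refine integral_congr_ae (Filter.Eventually.of_forall fun z => ?_)
          beta_reduce
          rw [hesymm, ← Real.exp_add]
          congr 1
          ring
      _ ≤ ∫ y, Real.exp (t ^ 2 * (c 0) ^ 2 / 8)
            * Real.exp (t * (G y - ∫ x, F x ∂Pm)) ∂ν := by
          refine integral_mono_ae ?_ (hExpGInt.const_mul _) ?_
          · refine integrable_of_abs_le
              (K := Real.exp (|t| * (K + K)) * Real.exp (|t| * (K + |∫ x, F x ∂Pm|)))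
              ((hInnerMeas.mul hExpGMeas).aestronglyMeasurable)
              (Filter.Eventually.of_forall fun y => ?_)
            rw [abs_mul]
            refine mul_le_mul (hInnerBd y) ?_ (abs_nonneg _) (Real.exp_pos _).le
            rw [abs_of_pos (Real.exp_pos _)]
            apply Real.exp_le_exp.2 (le_trans (le_abs_self _) ?_)
            rw [abs_mul]
            refine mul_le_mul_of_nonneg_left ?_ (abs_nonneg t)
            exact (abs_sub _ _).trans (add_le_add (hGbd _) le_rfl)
          · filter_upwards [hsec] with y hy
            exact mul_le_mul_of_nonneg_right hy (Real.exp_pos _).le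
      _ = Real.exp (t ^ 2 * (c 0) ^ 2 / 8)
            * ∫ y, Real.exp (t * (G y - ∫ x, F x ∂Pm)) ∂ν := integral_const_mul _ _
      _ ≤ Real.exp (t ^ 2 * (c 0) ^ 2 / 8)
            * Real.exp (t ^ 2 * (∑ j : Fin n, (c j.succ) ^ 2) / 8) := by
          refine mul_le_mul_of_nonneg_left ?_ (Real.exp_pos _).le
          rw [hEF]
          exact ih μt hμt' G hGmeas K hGbd (fun j => c j.succ) (fun j => hc _) hoscG t
      _ = Real.exp (t ^ 2 * (∑ i, (c i) ^ 2) / 8) := by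
          rw [← Real.exp_add]
          congr 1
          rw [Fin.sum_univ_succ]
          ring

/-! ### Main theorem -/

/-- Extension of McDiarmid's concentration inequality to functions that are
`c`-bounded only on a subset `Ξ` (Combes' extension). -/
theorem mcdiarmid_extension
    {α : Type*} [MeasurableSpace α] {Ω : Type*} [MeasurableSpace Ω]
    (P : Measure α) [IsProbabilityMeasure P]
    {n : ℕ} (X : Fin n → α → Ω)
    (hX_meas : ∀ i, Measurable (X i))
    (hX_indep : iIndepFun X P)
    (f : (Fin n → Ω) → ℝ) (hf_meas : Measurable f)
    (Ξ : Set (Fin n → Ω)) (hΞ : MeasurableSet Ξ)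
    (c : Fin n → ℝ) (hc : ∀ i, 0 ≤ c i)
    (hf_bounded : ∀ x ∈ Ξ, ∀ x' ∈ Ξ,
      |f x - f x'| ≤ ∑ i, if x i ≠ x' i then c i else 0)
    (hΞ_pos : 0 < (P {a | (fun i => X i a) ∈ Ξ}).toReal)
    (m γ : ℝ)
    (hm : m = (∫ a in {a | (fun i => X i a) ∈ Ξ}, f (fun i => X i a) ∂P) /
      (P {a | (fun i => X i a) ∈ Ξ}).toReal)
    (hγ : γ = 1 - (P {a | (fun i => X i a) ∈ Ξ}).toReal)
    (ε : ℝ) (hε : ε > γ * ∑ i, c i) :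
    (P {a | |f (fun i => X i a) - m| > ε}).toReal ≤
      2 * γ + 2 * Real.exp (-(2 * (ε - γ * ∑ i, c i) ^ 2) / (∑ i, (c i) ^ 2)) := by
  -- pushforward to the product measure
  set J : α → (Fin n → Ω) := fun a i => X i a with hJdef
  have hJ : Measurable J := measurable_pi_lambda _ hX_meas
  set μ' : Fin n → Measure Ω := fun i => P.map (X i) with hμ'
  haveI hμ'i : ∀ i, IsProbabilityMeasure (μ' i) :=
    fun i => Measure.isProbabilityMeasure_map (hX_meas i).aemeasurable
  set Pm := Measure.pi μ' with hPm
  haveI : IsProbabilityMeasure Pm := by rw [hPm]; infer_instance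
  have hmap : P.map J = Pm := by
    rw [hPm]
    refine (Measure.pi_eq fun s hs => ?_).symm
    rw [Measure.map_apply hJ (MeasurableSet.univ_pi hs)]
    have hpre : J ⁻¹' (Set.pi Set.univ s) = ⋂ i ∈ Finset.univ, (X i) ⁻¹' (s i) := by
      ext a
      simp [hJdef, Set.mem_pi]
    rw [hpre, hX_indep.meas_biInter (fun i _ => ⟨s i, hs i, rfl⟩)]
    · refine Finset.prod_congr rfl fun i _ => ?_
      rw [hμ']
      rw [Measure.map_apply (hX_meas i) (hs i)]
  have hset : {a | (fun i => X i a) ∈ Ξ} = J ⁻¹' Ξ := rfl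
  have hPΞ : (P {a | (fun i => X i a) ∈ Ξ}) = Pm Ξ := by
    rw [hset, ← hmap, Measure.map_apply hJ hΞ]
  set β := (Pm Ξ).toReal with hβ
  have hβpos : 0 < β := by rw [hβ, ← hPΞ]; exact hΞ_pos
  have hβ1 : β ≤ 1 := by
    rw [hβ]
    have h1 : Pm Ξ ≤ 1 := prob_le_one
    have := ENNReal.toReal_mono ENNReal.one_ne_top h1
    simpa using this
  have hγβ : γ = 1 - β := by rw [hγ, hPΞ, hβ]
  have hγ0 : 0 ≤ γ := by rw [hγβ]; linarith
  -- basic objects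
  set D := ∑ i, c i with hD
  have hD0 : 0 ≤ D := Finset.sum_nonneg fun i _ => hc i
  have hΞne : Ξ.Nonempty := by
    refine nonempty_of_measure_ne_zero (μ := Pm) ?_
    intro hcon
    rw [hβ, hcon] at hβpos
    simp at hβpos
  obtain ⟨x₀, hx₀⟩ := hΞne
  have hfb : ∀ x ∈ Ξ, ∀ y ∈ Ξ, |f x - f y| ≤ D := fun x hx y hy =>
    (hf_bounded x hx y hy).trans (distC_le_sum hc x y)
  have hbddM : BddAbove (f '' Ξ) := by
    refine ⟨f x₀ + D, ?_⟩
    rintro r ⟨y, hy, rfl⟩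
    have := (abs_le.1 (hfb y hy x₀ hx₀)).2
    linarith
  set M := sSup (f '' Ξ) with hMdef
  have hM : ∀ x ∈ Ξ, f x ≤ M := fun x hx => le_csSup hbddM (Set.mem_image_of_mem f hx)
  have hMle : ∀ x' ∈ Ξ, M ≤ f x' + D := by
    intro x' hx'
    refine csSup_le ⟨f x₀, Set.mem_image_of_mem f hx₀⟩ ?_
    rintro r ⟨y, hy, rfl⟩
    have := (abs_le.1 (hfb y hy x' hx')).2
    linarith
  set L := M - D with hLdef
  -- the initial function and the cascade
  set g0 : (Fin n → Ω) → ℝ := fun x => if x ∈ Ξ then f x else M with hg0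
  have hgood0 : GoodExt c L M f Ξ g0 := by
    constructor
    · exact Measurable.ite hΞ hf_meas measurable_const
    · intro x
      rw [hg0]
      dsimp only
      split
      · rename_i hx
        have := hMle x hx
        rw [hLdef]; linarith
      · rw [hLdef]; linarith
    · intro x
      rw [hg0]; dsimp only
      split
      · rename_i hx; exact hM x hx
      · exact le_rfl
    · intro x' hx' y
      rw [hg0]; dsimp only
      split
      · rename_i hy
        have := (abs_le.1 (hf_bounded x' hx' y hy)).2
        have h0 : distC c x' y = ∑ i, if x' i ≠ y i then c i else 0 := rfl
        rw [h0]; linarith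
      · have h1 := hM x' hx'
        have h2 := distC_nonneg hc x' y
        linarith
    · intro x hx
      rw [hg0]; dsimp only
      rw [if_pos hx]
  set fT := cascade μ' c L g0 n with hfT
  have hgood : GoodExt c L M f Ξ fT := cascade_good μ' hc hgood0 n
  have hosc : ∀ i : Fin n, ∀ᵐ p ∂(Pm.prod (μ' i)),
      |fT (Function.update p.1 i p.2) - fT p.1| ≤ c i :=
    fun i => cascade_osc μ' hc hgood0 n i i.isLt
  set KT := |M| + D with hKT
  have hKTb : ∀ x, |fT x| ≤ KT := by
    intro x
    rw [hKT, abs_le]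
    constructor
    · have h1 := hgood.lb x
      rw [hLdef] at h1
      have := neg_abs_le M
      linarith
    · have h1 := hgood.ub x
      have := le_abs_self M
      linarith
  have hfTm : Measurable fT := hgood.meas
  have hfTint : Integrable fT Pm :=
    integrable_of_abs_le hfTm.aestronglyMeasurable (Filter.Eventually.of_forall hKTb)
  -- identify m
  have hmβ : m * β = ∫ x in Ξ, fT x ∂Pm := by
    have h1 : ∫ a in {a | (fun i => X i a) ∈ Ξ}, f (fun i => X i a) ∂P
        = ∫ x in Ξ, f x ∂Pm := by
      rw [hset, ← hmap, setIntegral_map hΞ (hf_meas.aestronglyMeasurable) hJ.aemeasurable]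
    have h2 : ∫ x in Ξ, f x ∂Pm = ∫ x in Ξ, fT x ∂Pm :=
      setIntegral_congr_fun hΞ fun x hx => (hgood.eqOn x hx).symm
    rw [hm, hPΞ, ← hβ, h1, h2]
    field_simp
  -- |fT - m| ≤ D pointwise
  have hfTub : ∀ y, fT y ≤ m + D := by
    intro y
    have hmono : ∫ x in Ξ, (fT y - D) ∂Pm ≤ ∫ x in Ξ, fT x ∂Pm := by
      refine setIntegral_mono_on (integrableOn_const)
        (hfTint.integrableOn) hΞ ?_
      intro x hx
      rw [hgood.eqOn x hx]
      have h1 := hgood.ub y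
      have h2 := hMle x hx
      linarith
    rw [setIntegral_const, ← hmβ] at hmono
    rw [measureReal_def, ← hβ] at hmono
    have : β * (fT y - D) ≤ m * β := by
      simpa [smul_eq_mul] using hmono
    have h3 : fT y - D ≤ m := by
      rw [mul_comm m β] at this
      exact le_of_mul_le_mul_left (by linarith [this]) hβpos
    linarith
  have hfTlb : ∀ y, m - D ≤ fT y := by
    intro y
    have hmono : ∫ x in Ξ, fT x ∂Pm ≤ ∫ x in Ξ, (fT y + D) ∂Pm := by
      refine setIntegral_mono_on (hfTint.integrableOn)
        (integrableOn_const) hΞ ?_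
      intro x hx
      rw [hgood.eqOn x hx]
      have h1 := hgood.lower x hx y
      have h2 := distC_le_sum hc x y
      rw [← hD] at h2
      linarith
    rw [setIntegral_const, ← hmβ, measureReal_def, ← hβ] at hmono
    have : m * β ≤ β * (fT y + D) := by
      simpa [smul_eq_mul] using hmono
    have h3 : m ≤ fT y + D := by
      rw [mul_comm m β] at this
      exact le_of_mul_le_mul_left (by linarith [this]) hβpos
    linarith
  -- mean comparison
  set E := ∫ y, fT y ∂Pm with hE
  have hEm : |E - m| ≤ γ * D := by
    have hsplit : ∫ x in Ξ, fT x ∂Pm + ∫ x in Ξᶜ, fT x ∂Pm = E :=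
      integral_add_compl hΞ hfTint
    have hcompl : (Pm Ξᶜ).toReal = 1 - β := by
      rw [prob_compl_eq_one_sub hΞ, ENNReal.toReal_sub_of_le prob_le_one ENNReal.one_ne_top]
      simp [hβ]
    have hconst : ∫ _ in Ξᶜ, m ∂Pm = (1 - β) * m := by
      rw [setIntegral_const, measureReal_def, hcompl, smul_eq_mul]
    have hdiff : E - m = ∫ x in Ξᶜ, (fT x - m) ∂Pm := by
      rw [integral_sub (hfTint.integrableOn)
        (integrableOn_const), hconst]
      rw [← hmβ] at hsplit
      linarith [hsplit]
    rw [hdiff]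
    have hb := norm_setIntegral_le_of_norm_le_const (μ := Pm) (s := Ξᶜ) (C := D)
      (f := fun x => fT x - m)
      (measure_lt_top Pm Ξᶜ) (fun x _ => by
        show ‖fT x - m‖ ≤ D
        rw [Real.norm_eq_abs, abs_le]
        constructor
        · have := hfTlb x; linarith
        · have := hfTub x; linarith)
    rw [Real.norm_eq_abs] at hb
    refine hb.trans ?_
    rw [measureReal_def, hcompl, hγβ]
    rw [mul_comm]
  -- the Chernoff bound
  set σ2 := ∑ i, (c i) ^ 2 with hσ2
  set ε' := ε - γ * D with hε'
  have hε'pos : 0 < ε' := by rw [hε', hD]; linarith [hε]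
  by_cases hσ0 : σ2 = 0
  · -- degenerate case: the exponential term is exp 0 = 1
    have hrhs : -(2 * (ε - γ * ∑ i, c i) ^ 2) / (∑ i, (c i) ^ 2) = 0 := by
      rw [← hσ2, hσ0, div_zero]
    rw [hrhs, Real.exp_zero]
    have hle1 : (P {a | |f (fun i => X i a) - m| > ε}).toReal ≤ 1 := by
      have h1 : P {a | |f (fun i => X i a) - m| > ε} ≤ 1 := prob_le_one
      have := ENNReal.toReal_mono ENNReal.one_ne_top h1
      simpa using this
    linarith
  have hσ2pos : 0 < σ2 := lt_of_le_of_ne (Finset.sum_nonneg fun i _ => sq_nonneg _)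
    (Ne.symm hσ0)
  have chernoff : ∀ (Y : (Fin n → Ω) → ℝ), Measurable Y → (∀ x, |Y x| ≤ KT) →
      (∀ i, ∀ᵐ p ∂(Pm.prod (μ' i)), |Y (Function.update p.1 i p.2) - Y p.1| ≤ c i) →
      (Pm {x | ε' ≤ Y x - ∫ y, Y y ∂Pm}).toReal ≤ Real.exp (-(2 * ε' ^ 2) / σ2) := by
    intro Y hYm hKY hoscY
    set t := 4 * ε' / σ2 with ht
    have ht0 : 0 ≤ t := by positivity
    have hZm : Measurable fun x => Y x - ∫ y, Y y ∂Pm := hYm.sub measurable_const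
    have hint : Integrable (fun x => Real.exp (t * (Y x - ∫ y, Y y ∂Pm))) Pm := by
      refine integrable_of_abs_le (K := Real.exp (|t| * (KT + |∫ y, Y y ∂Pm|)))
        (Real.measurable_exp.comp (hZm.const_mul t)).aestronglyMeasurable
        (Filter.Eventually.of_forall fun x => ?_)
      rw [abs_of_pos (Real.exp_pos _)]
      apply Real.exp_le_exp.2 (le_trans (le_abs_self _) ?_)
      rw [abs_mul]
      refine mul_le_mul_of_nonneg_left ?_ (abs_nonneg t)
      exact (abs_sub _ _).trans (add_le_add (hKY _) le_rfl)
    have h1 := measure_ge_le_exp_mul_mgf (X := fun x => Y x - ∫ y, Y y ∂Pm) (μ := Pm)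
      ε' ht0 hint
    have h2 : mgf (fun x => Y x - ∫ y, Y y ∂Pm) Pm t ≤ Real.exp (t ^ 2 * σ2 / 8) := by
      have := mgf_pi n μ' hμ'i Y hYm KT hKY c hc hoscY t
      rw [← hPm] at this
      simpa [mgf, hσ2] using this
    refine h1.trans ?_
    calc Real.exp (-t * ε') * mgf (fun x => Y x - ∫ y, Y y ∂Pm) Pm t
        ≤ Real.exp (-t * ε') * Real.exp (t ^ 2 * σ2 / 8) :=
          mul_le_mul_of_nonneg_left h2 (Real.exp_pos _).le
      _ = Real.exp (-t * ε' + t ^ 2 * σ2 / 8) := (Real.exp_add _ _).symm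
      _ = Real.exp (-(2 * ε' ^ 2) / σ2) := by
          congr 1
          rw [ht]
          field_simp
          ring
  -- split the event
  set A := {x : Fin n → Ω | ε < |f x - m|} with hA
  have hAmeas : MeasurableSet A :=
    measurableSet_lt measurable_const (hf_meas.sub measurable_const).abs
  have hPA : P {a | |f (fun i => X i a) - m| > ε} = Pm A := by
    have : {a | |f (fun i => X i a) - m| > ε} = J ⁻¹' A := rfl
    rw [this, ← hmap, Measure.map_apply hJ hAmeas]
  set B2 := {x : Fin n → Ω | ε' ≤ fT x - ∫ y, fT y ∂Pm} with hB2
  set B3 := {x : Fin n → Ω | ε' ≤ (fun z => -fT z) x - ∫ y, (fun z => -fT z) y ∂Pm} with hB3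
  have hsub : A ⊆ Ξᶜ ∪ B2 ∪ B3 := by
    intro x hx
    by_cases hxΞ : x ∈ Ξ
    · have hfx : fT x = f x := hgood.eqOn x hxΞ
      have h1 : ε < |f x - m| := hx
      have h2 : ε' < |fT x - E| := by
        have habs : |f x - m| ≤ |fT x - E| + |E - m| := by
          rw [hfx]
          have : f x - m = (f x - E) + (E - m) := by ring
          rw [this]
          exact abs_add_le _ _
        have := hEm
        rw [hε']
        rw [hD] at *
        linarith
      rcases le_abs.1 h2.le with h3 | h3
      · left; right
        rw [hB2, ← hE]
        exact h3
      · right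
        rw [hB3]
        simp only [Set.mem_setOf_eq, integral_neg]
        rw [← hE]
        linarith
    · left; left; exact hxΞ
  have hmeasB2 : MeasurableSet B2 :=
    measurableSet_le measurable_const (hfTm.sub measurable_const)
  have hmeasB3 : MeasurableSet B3 :=
    measurableSet_le measurable_const (hfTm.neg.sub measurable_const)
  have hchain : (Pm A).toReal ≤ (Pm Ξᶜ).toReal + (Pm B2).toReal + (Pm B3).toReal := by
    have h1 : Pm A ≤ Pm Ξᶜ + Pm B2 + Pm B3 := by
      calc Pm A ≤ Pm (Ξᶜ ∪ B2 ∪ B3) := measure_mono hsub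
        _ ≤ Pm (Ξᶜ ∪ B2) + Pm B3 := measure_union_le _ _
        _ ≤ Pm Ξᶜ + Pm B2 + Pm B3 := add_le_add (measure_union_le _ _) le_rfl
    have h2 := ENNReal.toReal_mono (by finiteness) h1
    rw [ENNReal.toReal_add (by finiteness) (by finiteness),
      ENNReal.toReal_add (by finiteness) (by finiteness)] at h2
    exact h2
  have hcompl : (Pm Ξᶜ).toReal = γ := by
    rw [prob_compl_eq_one_sub hΞ, ENNReal.toReal_sub_of_le prob_le_one ENNReal.one_ne_top,
      hγβ]
    simp [hβ]
  have hch2 : (Pm B2).toReal ≤ Real.exp (-(2 * ε' ^ 2) / σ2) :=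
    chernoff fT hfTm hKTb hosc
  have hch3 : (Pm B3).toReal ≤ Real.exp (-(2 * ε' ^ 2) / σ2) := by
    refine chernoff (fun z => -fT z) hfTm.neg (fun x => by rw [abs_neg]; exact hKTb x) ?_
    intro i
    filter_upwards [hosc i] with p hp
    calc |(-fT (Function.update p.1 i p.2)) - (-fT p.1)|
        = |fT p.1 - fT (Function.update p.1 i p.2)| := by rw [neg_sub_neg]
      _ = |fT (Function.update p.1 i p.2) - fT p.1| := abs_sub_comm _ _
      _ ≤ c i := hp
  rw [hPA]
  have hfinal : -(2 * (ε - γ * ∑ i, c i) ^ 2) / (∑ i, (c i) ^ 2) = -(2 * ε' ^ 2) / σ2 := by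
    rw [hε', hD, hσ2]
  rw [hfinal]
  calc (Pm A).toReal ≤ (Pm Ξᶜ).toReal + (Pm B2).toReal + (Pm B3).toReal := hchain
    _ ≤ γ + Real.exp (-(2 * ε' ^ 2) / σ2) + Real.exp (-(2 * ε' ^ 2) / σ2) := by
        rw [hcompl]
        exact add_le_add (add_le_add le_rfl hch2) hch3
    _ ≤ 2 * γ + 2 * Real.exp (-(2 * ε' ^ 2) / σ2) := by linarith
end

section
/- Let Ξ ⊆ (Ω×Y)^n satisfy: for all z ∈ Ξ and all 1 ≤ i ≤ n, ‖R_h(z_{-i}) - f‖_∞ < C_1, and for all x ∈ Ω the map z_{-i} ↦ R_h(z_{-i})(x) is C_2·𝟙-bounded. Then the leave-one-out cross-validation score CV(z,h) = (1/n) Σ_{i=1}^n |R_h(z_{-i})(x_i) - f(x_i)|² is c-bounded on Ξ with c = C_1(C_1/n + 2C_2)·𝟙, i.e. changing any one sample changes CV(z,h) by at most C_1²/n + 2 C_1 C_2 (up to the stated bound C_1(C_1/n + 2C_2)). -/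
open scoped Classical

/-- `c`-boundedness of the leave-one-out cross-validation score on the set `Ξ`
of good samples: changing one sample changes `CV(z,h)` by at most
`C₁ (C₁/n + 2 C₂)` per changed coordinate. -/
theorem cv_c_bounded
    {Ω : Type*} (f : Ω → ℝ)
    {n : ℕ} (R : (Fin n → Ω × ℝ) → Ω → ℝ)
    (Ξ : Set (Fin (n + 1) → Ω × ℝ))
    (C₁ C₂ : ℝ) (hC₁ : 0 ≤ C₁) (hC₂ : 0 ≤ C₂)
    (h1 : ∀ z ∈ Ξ, ∀ i : Fin (n + 1), ∀ x : Ω,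
      |R (fun j => z (i.succAbove j)) x - f x| < C₁)
    (h2 : ∀ z ∈ Ξ, ∀ z' ∈ Ξ, ∀ i : Fin (n + 1), ∀ x : Ω,
      |R (fun j => z (i.succAbove j)) x - R (fun j => z' (i.succAbove j)) x| ≤
        ∑ j : Fin n, if z (i.succAbove j) ≠ z' (i.succAbove j) then C₂ else 0) :
    ∀ z ∈ Ξ, ∀ z' ∈ Ξ,
      |(1 / (n + 1 : ℝ)) * ∑ i : Fin (n + 1),
          (R (fun j => z (i.succAbove j)) (z i).1 - f (z i).1) ^ 2 -
        (1 / (n + 1 : ℝ)) * ∑ i : Fin (n + 1),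
          (R (fun j => z' (i.succAbove j)) (z' i).1 - f (z' i).1) ^ 2| ≤
        ∑ k : Fin (n + 1), if z k ≠ z' k then C₁ * (C₁ / (n + 1) + 2 * C₂) else 0 := by
  intro z hz z' hz'
  set D : Finset (Fin (n + 1)) := Finset.univ.filter (fun k => z k ≠ z' k) with hD
  set m : ℝ := (D.card : ℝ) with hm
  have hm0 : (0:ℝ) ≤ m := by positivity
  have hn1 : (0:ℝ) < (n:ℝ) + 1 := by positivity
  -- per-index bound
  have key : ∀ i : Fin (n + 1),
      |(R (fun j => z (i.succAbove j)) (z i).1 - f (z i).1) ^ 2 -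
        (R (fun j => z' (i.succAbove j)) (z' i).1 - f (z' i).1) ^ 2|
      ≤ (if z i ≠ z' i then C₁ ^ 2 else 0) + 2 * C₁ * C₂ * m := by
    intro i
    have ha := h1 z hz i (z i).1
    have hb := h1 z' hz' i (z' i).1
    by_cases hzz : z i = z' i
    · simp only [hzz, ne_eq, not_true_eq_false, if_neg (not_not_intro rfl)]
      simp only [← hzz] at hb ⊢
      set a := R (fun j => z (i.succAbove j)) (z i).1 - f (z i).1 with hA
      set b := R (fun j => z' (i.succAbove j)) (z i).1 - f (z i).1 with hB
      have hab := h2 z hz z' hz' i (z i).1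
      have hsum : (∑ j : Fin n, if z (i.succAbove j) ≠ z' (i.succAbove j) then C₂ else 0)
          ≤ C₂ * m := by
        rw [← Finset.sum_filter, Finset.sum_const, nsmul_eq_mul]
        have hcard : (Finset.univ.filter
            (fun j : Fin n => z (i.succAbove j) ≠ z' (i.succAbove j))).card ≤ D.card := by
          apply Finset.card_le_card_of_injOn (fun j => i.succAbove j)
          · intro j hj
            simp only [hD, Finset.mem_coe, Finset.mem_filter, Finset.mem_univ, true_and] at hj ⊢
            exact hj
          · intro a _ b _ h
            exact i.succAbove_right_injective h
        calc ((Finset.univ.filter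
              (fun j : Fin n => z (i.succAbove j) ≠ z' (i.succAbove j))).card : ℝ) * C₂
            ≤ m * C₂ := by
              apply mul_le_mul_of_nonneg_right _ hC₂
              rw [hm]; exact_mod_cast hcard
          _ = C₂ * m := mul_comm _ _
      have habd : |a - b| ≤ C₂ * m := by
        have : a - b = R (fun j => z (i.succAbove j)) (z i).1 -
            R (fun j => z' (i.succAbove j)) (z i).1 := by rw [hA, hB]; ring
        rw [this]
        exact hab.trans hsum
      have hsumab : |a + b| ≤ 2 * C₁ := by
        calc |a + b| ≤ |a| + |b| := abs_add_le _ _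
          _ ≤ 2 * C₁ := by linarith
      calc |a ^ 2 - b ^ 2| = |a + b| * |a - b| := by
            rw [← abs_mul]; ring_nf
        _ ≤ (2 * C₁) * (C₂ * m) := by
            apply mul_le_mul hsumab habd (abs_nonneg _)
            linarith [abs_nonneg (a + b)]
        _ = 0 + 2 * C₁ * C₂ * m := by ring
    · rw [if_pos hzz]
      have ha' := abs_lt.mp ha
      have hb' := abs_lt.mp hb
      have h2m : 0 ≤ 2 * C₁ * C₂ * m := by positivity
      rw [abs_le]
      constructor <;>
        nlinarith [sq_nonneg (R (fun j => z (i.succAbove j)) (z i).1 - f (z i).1),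
          sq_nonneg (R (fun j => z' (i.succAbove j)) (z' i).1 - f (z' i).1)]
  -- sum up
  have hRHS : (∑ k : Fin (n + 1), if z k ≠ z' k then C₁ * (C₁ / (n + 1) + 2 * C₂) else 0)
      = m * (C₁ * (C₁ / (n + 1) + 2 * C₂)) := by
    rw [← Finset.sum_filter, Finset.sum_const, nsmul_eq_mul, ← hD, ← hm]
  have hmid : (∑ i : Fin (n + 1), if z i ≠ z' i then C₁ ^ 2 else 0) = m * C₁ ^ 2 := by
    rw [← Finset.sum_filter, Finset.sum_const, nsmul_eq_mul, ← hD, ← hm]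
  have hmain : |∑ i : Fin (n + 1),
      ((R (fun j => z (i.succAbove j)) (z i).1 - f (z i).1) ^ 2 -
        (R (fun j => z' (i.succAbove j)) (z' i).1 - f (z' i).1) ^ 2)|
      ≤ m * C₁ ^ 2 + ((n : ℝ) + 1) * (2 * C₁ * C₂ * m) := by
    calc |∑ i : Fin (n + 1),
        ((R (fun j => z (i.succAbove j)) (z i).1 - f (z i).1) ^ 2 -
          (R (fun j => z' (i.succAbove j)) (z' i).1 - f (z' i).1) ^ 2)|
        ≤ ∑ i : Fin (n + 1),
          |(R (fun j => z (i.succAbove j)) (z i).1 - f (z i).1) ^ 2 -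
            (R (fun j => z' (i.succAbove j)) (z' i).1 - f (z' i).1) ^ 2| :=
          Finset.abs_sum_le_sum_abs _ _
      _ ≤ ∑ i : Fin (n + 1),
          ((if z i ≠ z' i then C₁ ^ 2 else 0) + 2 * C₁ * C₂ * m) :=
          Finset.sum_le_sum (fun i _ => key i)
      _ = m * C₁ ^ 2 + ((n : ℝ) + 1) * (2 * C₁ * C₂ * m) := by
          rw [Finset.sum_add_distrib, hmid, Finset.sum_const, Finset.card_univ,
            Fintype.card_fin, nsmul_eq_mul]
          push_cast
          ring
  rw [hRHS, ← mul_sub, ← Finset.sum_sub_distrib, abs_mul]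
  rw [abs_of_pos (by positivity : (0:ℝ) < 1 / ((n:ℝ) + 1))]
  calc (1 / ((n:ℝ) + 1)) * |∑ i : Fin (n + 1),
      ((R (fun j => z (i.succAbove j)) (z i).1 - f (z i).1) ^ 2 -
        (R (fun j => z' (i.succAbove j)) (z' i).1 - f (z' i).1) ^ 2)|
      ≤ (1 / ((n:ℝ) + 1)) * (m * C₁ ^ 2 + ((n : ℝ) + 1) * (2 * C₁ * C₂ * m)) := by
        apply mul_le_mul_of_nonneg_left hmain
        positivity
    _ = m * (C₁ * (C₁ / (n + 1) + 2 * C₂)) := by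
        field_simp
end

section
/- Uniform error of Shepard's model: let k_h : [0,∞) → [0,∞) be supported on [0,1/h], K_h(x,x') = k_h(d(x,x')) with d the periodic distance on the torus 𝕋, f : 𝕋 → ℝ Lipschitz with constant L, and suppose the mesh norm δ_{{x_1,...,x_n}} = max_{x∈𝕋} min_i d(x,x_i) is strictly less than 1/h. Then for all x ∈ 𝕋, |R_h(z)(x) - f(x)| ≤ L/h, i.e. ‖R_h(z) - f‖_∞ ≤ L/h. -/
/-- Uniform error of Shepard's model on the torus: if the kernel `k_h` is
supported on `[0, 1/h]`, `f` is `L`-Lipschitz and the mesh norm is `< 1/h`,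
then the Shepard interpolant is uniformly within `L/h` of `f`. -/
theorem shepard_uniform_error
    (h : ℝ) (hh : 0 < h) (k : ℝ → ℝ)
    (hk_nonneg : ∀ t, 0 ≤ k t)
    (hk_supp : ∀ t, 1 / h < t → k t = 0)
    (hk_pos : ∀ t, 0 ≤ t → t < 1 / h → 0 < k t)
    (f : AddCircle (1 : ℝ) → ℝ) (L : ℝ)
    (hf : ∀ a b : AddCircle (1 : ℝ), |f a - f b| ≤ L * dist a b)
    {n : ℕ} (p : Fin n → AddCircle (1 : ℝ))
    (hmesh : ∀ x : AddCircle (1 : ℝ), ∃ i, dist x (p i) < 1 / h) :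
    ∀ x : AddCircle (1 : ℝ),
      |(∑ i, k (dist x (p i)) * f (p i)) / (∑ i, k (dist x (p i))) - f x| ≤ L / h := by
  -- L is nonnegative
  have hL : 0 ≤ L := by
    have hne : ((0 : ℝ) : AddCircle (1 : ℝ)) ≠ ((1/2 : ℝ) : AddCircle (1 : ℝ)) := by
      rw [Ne, AddCircle.coe_eq_coe_iff_of_mem_Ico (a := 0) (by norm_num) (by norm_num)]
      norm_num
    have hd : 0 < dist ((0 : ℝ) : AddCircle (1 : ℝ)) ((1/2 : ℝ) : AddCircle (1 : ℝ)) :=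
      dist_pos.mpr hne
    have := hf ((0 : ℝ) : AddCircle (1 : ℝ)) ((1/2 : ℝ) : AddCircle (1 : ℝ))
    nlinarith [abs_nonneg (f ((0 : ℝ) : AddCircle (1 : ℝ)) - f ((1/2 : ℝ) : AddCircle (1 : ℝ)))]
  intro x
  set S := ∑ i, k (dist x (p i)) with hSdef
  have hS : 0 < S := by
    obtain ⟨i, hi⟩ := hmesh x
    exact Finset.sum_pos' (fun j _ => hk_nonneg _)
      ⟨i, Finset.mem_univ i, hk_pos _ dist_nonneg hi⟩
  have key : (∑ i, k (dist x (p i)) * f (p i)) / S - f x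
      = (∑ i, k (dist x (p i)) * (f (p i) - f x)) / S := by
    rw [div_sub' (ne_of_gt hS)]
    congr 1
    rw [hSdef, Finset.sum_mul]
    rw [← Finset.sum_sub_distrib]
    exact Finset.sum_congr rfl (fun i _ => by ring)
  rw [key, abs_div, abs_of_pos hS, div_le_iff₀ hS]
  calc |∑ i, k (dist x (p i)) * (f (p i) - f x)|
      ≤ ∑ i, |k (dist x (p i)) * (f (p i) - f x)| := Finset.abs_sum_le_sum_abs _ _
    _ ≤ ∑ i, k (dist x (p i)) * (L / h) := by
        apply Finset.sum_le_sum
        intro i _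
        rw [abs_mul, abs_of_nonneg (hk_nonneg _)]
        by_cases hd : dist x (p i) ≤ 1 / h
        · apply mul_le_mul_of_nonneg_left _ (hk_nonneg _)
          calc |f (p i) - f x| ≤ L * dist (p i) x := hf _ _
            _ ≤ L * (1 / h) := by
                rw [dist_comm]
                exact mul_le_mul_of_nonneg_left hd hL
            _ = L / h := by ring
        · rw [hk_supp _ (lt_of_not_ge hd)]
          simp
    _ = S * (L / h) := by rw [hSdef, Finset.sum_mul]
    _ = L / h * S := by ring
end
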